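/- The contracted semigroup algebra ℚ₀T¹ has the hyperbolic property: for every ℤ-order Γ in ℚ₀T¹, the unit group Γˣ contains no subgroup isomorphic to ℤ × ℤ. -/

import Mathlib

/-!
`ℚ₀T¹` is the algebra of lower triangular `2 × 2` rational matrices. Elements of a `ℤ`-order are
integral over `ℤ`, so the diagonal entries of its units are rational units integral over `ℤ`
together with their inverses, i.e. `±1`. Hence squares of units are unipotent, and on unipotent
lower triangular matrices the lower-left entry is a homomorphism to `(ℚ, +)`. A copy of `ℤ × ℤ`
among the units would thus give, after squaring, an embedding `ℤ × ℤ ↪ ℚ`, impossible since `ℚ`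
has rank one over `ℤ`.
-/

/-- The four-element monoid `T¹ = {1, e, f, θ}` with `θ` an absorbing zero,
`e² = e`, `f² = f`, `ef = f`, `fe = e`. -/
inductive T1 : Type
  | one : T1
  | e : T1
  | f : T1
  | theta : T1
deriving DecidableEq

instance instFintypeT1 : Fintype T1 where
  elems := {.one, .e, .f, .theta}
  complete := fun x => by cases x <;> decide

instance : Monoid T1 where
  one := .one
  mul x y :=
    match x, y with
    | .one, y => y
    | x, .one => x
    | .theta, _ => .theta
    | _, .theta => .theta
    | _, .e => .e
    | _, .f => .f
  mul_assoc := by decide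
  one_mul := by decide
  mul_one := by decide

/-- The contracted semigroup algebra `ℚ₀T¹`: the quotient of the monoid algebra
`ℚ[T¹]` by the two-sided ideal spanned by `θ`. -/
noncomputable abbrev Q0T1 : Type :=
  (TwoSidedIdeal.span {MonoidAlgebra.single T1.theta (1 : ℚ)}).ringCon.Quotient

/-- The `ℚ`-algebra structure on the quotient of a `ℚ`-algebra by a two-sided ideal. -/
noncomputable instance quotAlgebra {A : Type*} [Ring A] [Algebra ℚ A]
    (I : TwoSidedIdeal A) : Algebra ℚ I.ringCon.Quotient :=
  RingHom.toAlgebra'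
    ((I.ringCon.mk' : A →+* I.ringCon.Quotient).comp (algebraMap ℚ A))
    (fun q x => Quotient.inductionOn' x fun a => by
      show (I.ringCon.mk' (algebraMap ℚ A q)) * I.ringCon.mk' a
          = I.ringCon.mk' a * I.ringCon.mk' (algebraMap ℚ A q)
      rw [← map_mul, ← map_mul, Algebra.commutes])


/-- A `ℤ`-order in a finite-dimensional `ℚ`-algebra `A`. -/
def IsZOrder (A : Type*) [Ring A] [Algebra ℚ A] (Γ : Subring A) : Prop :=
  Γ.toAddSubgroup.FG ∧ Submodule.span ℚ (Γ : Set A) = ⊤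

/-- A group `G` contains a subgroup isomorphic to `ℤ × ℤ`. -/
def HasZxZ (G : Type*) [Group G] : Prop :=
  ∃ f : Multiplicative (ℤ × ℤ) →* G, Function.Injective f

/-- The hyperbolic property: no `ℤ`-order of `A` has a unit group containing `ℤ × ℤ`. -/
def HasHyperbolicProperty (A : Type*) [Ring A] [Algebra ℚ A] : Prop :=
  ∀ Γ : Subring A, IsZOrder A Γ → ¬ HasZxZ Γˣ

theorem AddMonoidHom.not_injective_int_prod_to_rat (Ψ : ℤ × ℤ →+ ℚ) : ¬ Function.Injective Ψ := by
  intro hΨ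
  have h := Ψ.toIntLinearMap.rank_le_of_injective hΨ
  rw [rank_prod', Module.rank_self, ← IsFractionRing.rank_right_eq ℤ ℚ ℚ, Module.rank_self] at h
  norm_num at h

theorem Rat.sq_eq_one_of_isIntegral {a b : ℚ} (hab : a * b = 1) (ha : IsIntegral ℤ a)
    (hb : IsIntegral ℤ b) : a ^ 2 = 1 := by
  obtain ⟨m, rfl⟩ := IsIntegrallyClosed.isIntegral_iff.mp ha
  obtain ⟨n, rfl⟩ := IsIntegrallyClosed.isIntegral_iff.mp hb
  simp only [algebraMap_int_eq, eq_intCast] at hab ⊢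
  rcases Int.eq_one_or_neg_one_of_mul_eq_one (by exact_mod_cast hab : m * n = 1) with rfl | rfl <;>
    norm_num

theorem RingHom.sq_apply_unit_eq_one {R : Type*} [Ring R] [Algebra.IsIntegral ℤ R] (χ : R →+* ℚ)
    (u : Rˣ) : χ u ^ 2 = 1 :=
  Rat.sq_eq_one_of_isIntegral (b := χ ↑u⁻¹) (by rw [← map_mul, u.mul_inv, map_one])
    ((Algebra.IsIntegral.isIntegral _).map χ.toIntAlgHom)
    ((Algebra.IsIntegral.isIntegral _).map χ.toIntAlgHom)

section LowerTriangular

variable {R : Type*} [Ring R] (φ : R →+* Matrix (Fin 2) (Fin 2) ℚ)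

def diagEntryRingHom (hφ01 : ∀ x, φ x 0 1 = 0) (i : Fin 2) : R →+* ℚ where
  toFun x := φ x i i
  map_one' := by simp
  map_mul' x y := by fin_cases i <;> simp [Matrix.mul_apply, hφ01]
  map_zero' := by simp
  map_add' x y := by simp

def lowerEntryHom {G : Type*} [Group G] (h : G →* Rˣ) (hdiag : ∀ g i, φ (h g) i i = 1) :
    G →* Multiplicative ℚ where
  toFun g := .ofAdd (φ (h g) 1 0)
  map_one' := by simp
  map_mul' g k := by simp [Matrix.mul_apply, hdiag, ← ofAdd_add]

lemma lowerEntryHom_injective (hφ : Function.Injective φ) (hφ01 : ∀ x, φ x 0 1 = 0)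
    {G : Type*} [Group G] {h : G →* Rˣ} (hh : Function.Injective h)
    (hdiag : ∀ g i, φ (h g) i i = 1) : Function.Injective (lowerEntryHom φ h hdiag) := by
  intro g k hgk
  refine hh (Units.ext (hφ (Matrix.ext fun i j => ?_)))
  fin_cases i <;> fin_cases j
  · exact (hdiag g 0).trans (hdiag k 0).symm
  · exact (hφ01 _).trans (hφ01 _).symm
  · exact hgk
  · exact (hdiag g 1).trans (hdiag k 1).symm

theorem not_hasZxZ_units_of_lowerTriangular [Algebra.IsIntegral ℤ R] (hφ : Function.Injective φ)
    (hφ01 : ∀ x, φ x 0 1 = 0) : ¬ HasZxZ Rˣ := by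
  rintro ⟨f, hf⟩
  set g := f.comp (powMonoidHom 2)
  have hg : Function.Injective g := hf.comp (pow_left_injective two_ne_zero)
  have hdiag : ∀ p i, φ (g p) i i = 1 := fun p i => by
    change diagEntryRingHom φ hφ01 i (f (p ^ 2) : R) = 1
    rw [map_pow, Units.val_pow_eq_pow_val, map_pow, RingHom.sq_apply_unit_eq_one]
  exact (AddMonoidHom.toMultiplicative.symm (lowerEntryHom φ g hdiag)).not_injective_int_prod_to_rat
    (lowerEntryHom_injective φ hφ hφ01 hg hdiag)

end LowerTriangular

namespace T1

open MonoidAlgebra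

def toMatrix : T1 →* Matrix (Fin 2) (Fin 2) ℚ where
  toFun
    | .one => 1
    | .e => !![0, 0; 1, 1]
    | .f => !![0, 0; 0, 1]
    | .theta => 0
  map_one' := rfl
  map_mul' x y := by cases x <;> cases y <;> simp [Matrix.one_fin_two]

noncomputable def toMatrixAlgHom : MonoidAlgebra ℚ T1 →ₐ[ℚ] Matrix (Fin 2) (Fin 2) ℚ :=
  lift ℚ _ T1 toMatrix

lemma toMatrixAlgHom_apply (x : MonoidAlgebra ℚ T1) :
    toMatrixAlgHom x = !![x.coeff one, 0; x.coeff e, x.coeff one + x.coeff e + x.coeff f] := by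
  rw [toMatrixAlgHom, lift_apply, Finsupp.sum_fintype _ _ (by simp)]
  simp only [Finset.univ, Fintype.elems, toMatrix]
  ext i j; fin_cases i <;> fin_cases j <;> simp [add_assoc]

lemma ker_toMatrixAlgHom :
    TwoSidedIdeal.ker toMatrixAlgHom = TwoSidedIdeal.span {single theta (1 : ℚ)} := by
  refine le_antisymm (fun x hx => ?_) (TwoSidedIdeal.span_le.mpr ?_)
  · rw [TwoSidedIdeal.mem_ker, toMatrixAlgHom_apply] at hx
    have h₀₀ : x.coeff one = 0 := by simpa using congrFun₂ hx 0 0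
    have h₁₀ : x.coeff e = 0 := by simpa using congrFun₂ hx 1 0
    have h₁₁ : x.coeff one + x.coeff e + x.coeff f = 0 := by simpa using congrFun₂ hx 1 1
    have hx_eq : x = x.coeff theta • single theta (1 : ℚ) := by
      ext t; cases t <;> simp [coeff_single] <;> linarith
    rw [hx_eq, Algebra.smul_def]
    exact TwoSidedIdeal.mul_mem_left _ _ _ (TwoSidedIdeal.subset_span rfl)
  · simp [TwoSidedIdeal.mem_ker, toMatrixAlgHom, toMatrix]

end T1

namespace Q0T1

noncomputable def toMatrix : Q0T1 →+* Matrix (Fin 2) (Fin 2) ℚ :=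
  RingCon.lift _ T1.toMatrixAlgHom.toRingHom
    (TwoSidedIdeal.ringCon_le_iff.mp T1.ker_toMatrixAlgHom.ge)

lemma toMatrix_injective : Function.Injective toMatrix :=
  RingCon.lift_injective_iff.mpr (congrArg TwoSidedIdeal.ringCon T1.ker_toMatrixAlgHom).symm

lemma toMatrix_apply_zero_one (x : Q0T1) : toMatrix x 0 1 = 0 := by
  induction x using Quotient.inductionOn' with | h a =>
  show T1.toMatrixAlgHom a 0 1 = 0
  simp [T1.toMatrixAlgHom_apply]

end Q0T1

theorem Q0T1_hyperbolic : HasHyperbolicProperty Q0T1 := by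
  rintro Γ ⟨hfg, -⟩
  have : Module.Finite ℤ Γ :=
    Module.Finite.iff_addGroup_fg.mpr ((AddGroup.fg_iff_addSubgroup_fg _).mpr hfg)
  exact not_hasZxZ_units_of_lowerTriangular (Q0T1.toMatrix.comp Γ.subtype)
    (Q0T1.toMatrix_injective.comp Subtype.val_injective) fun _ => Q0T1.toMatrix_apply_zero_one _
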